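/- arXiv:1711.10947 — 3 statements merged into one kernel-verified Lean document; each statement's English description precedes it below -/
import Mathlib

section
/- Let M1, M2, M3 be real matrices with M2 and M3 symmetric positive semi-definite (M1 of size p×q, M2 of size q×q, M3 of size p×p). Then every eigenvalue of the block matrix M = [[-M1ᵀM1 - M2, M1ᵀM3],[M1, -M3]] is real and non-positive. -/
/-!
With `P = [[M1ᵀM1 + M2, -M1ᵀ], [-M1, 1]]` and `Q = [[1, 0], [0, M3]]` one has `M = -P Q`.
Both factors are positive semidefinite (for `P` its Schur complement is `M2`), and a complex
eigenvalue `μ` of a product `P Q` of positive semidefinite matrices is a non-negative real: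
pairing `P (Q v) = μ v` with `Q v` gives `⟪Q v, P (Q v)⟫ = μ ⟪v, Q v⟫`, and if `⟪v, Q v⟫ = 0`
then `Q v = 0`, whence `μ = 0`.
-/

open Matrix Complex

open scoped ComplexOrder

namespace Matrix

variable {m n : Type*} [Fintype m] [Fintype n]

open scoped MatrixOrder in
theorem PosSemidef.map_ofReal [DecidableEq n] {A : Matrix n n ℝ} (hA : A.PosSemidef) :
    (A.map ofReal).PosSemidef := by
  obtain ⟨B, rfl⟩ := CStarAlgebra.nonneg_iff_eq_star_mul_self.mp hA.nonneg
  have hmap : (star B * B).map ofReal = (B.map ofReal)ᴴ * B.map ofReal := by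
    ext i j
    simp [mul_apply, conjTranspose_apply]
  rw [hmap]
  exact posSemidef_conjTranspose_mul_self _

theorem PosSemidef.nonneg_of_mul_mulVec_eq_smul {A Q : Matrix n n ℂ} (hA : A.PosSemidef)
    (hQ : Q.PosSemidef) {μ : ℂ} {v : n → ℂ} (hv : v ≠ 0) (h : (A * Q) *ᵥ v = μ • v) :
    0 ≤ μ := by
  have hpair : star (Q *ᵥ v) ⬝ᵥ (A *ᵥ (Q *ᵥ v)) = μ * (star v ⬝ᵥ (Q *ᵥ v)) := by
    rw [mulVec_mulVec, h, dotProduct_smul, star_mulVec, hQ.1.eq, ← dotProduct_mulVec,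
      smul_eq_mul]
  by_cases hQv : star v ⬝ᵥ (Q *ᵥ v) = 0
  · have hQv0 : Q *ᵥ v = 0 := (hQ.dotProduct_mulVec_zero_iff v).mp hQv
    have hμv : μ • v = 0 := by rw [← h, ← mulVec_mulVec, hQv0, mulVec_zero]
    exact ((smul_eq_zero.mp hμv).resolve_right hv).ge
  · have hpos : 0 < star v ⬝ᵥ (Q *ᵥ v) := (hQ.dotProduct_mulVec_nonneg v).lt_of_ne' hQv
    have hnonneg := hA.dotProduct_mulVec_nonneg (Q *ᵥ v)
    rw [hpair, ← zero_mul (star v ⬝ᵥ (Q *ᵥ v))] at hnonneg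
    exact le_of_mul_le_mul_right hnonneg hpos

theorem PosSemidef.nonneg_of_map_ofReal_mul_mulVec_eq_smul [DecidableEq n] {A Q : Matrix n n ℝ}
    (hA : A.PosSemidef) (hQ : Q.PosSemidef) {μ : ℂ} {v : n → ℂ} (hv : v ≠ 0)
    (h : (A * Q).map ofReal *ᵥ v = μ • v) : 0 ≤ μ :=
  hA.map_ofReal.nonneg_of_mul_mulVec_eq_smul hQ.map_ofReal hv <|
    (Matrix.map_mul (f := ofRealHom) : (A * Q).map ofReal = _) ▸ h

theorem fromBlocks_neg_transpose_mul_sub_eq_neg_mul {R : Type*} [CommRing R] [DecidableEq m]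
    [DecidableEq n] (M1 : Matrix m n R) (M2 : Matrix n n R) (M3 : Matrix m m R) :
    fromBlocks (-(M1ᵀ * M1) - M2) (M1ᵀ * M3) M1 (-M3) =
      -(fromBlocks (M1ᵀ * M1 + M2) (-M1ᵀ) (-M1) 1 * fromBlocks 1 0 0 M3) := by
  rw [fromBlocks_multiply, fromBlocks_neg]
  simp only [Matrix.mul_one, Matrix.mul_zero, add_zero, zero_add, Matrix.neg_mul, neg_add_rev,
    neg_neg, Matrix.one_mul, fromBlocks_inj, and_self, and_true]
  abel

theorem PosSemidef.fromBlocks_one_zero_zero [DecidableEq m] [DecidableEq n]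
    {M3 : Matrix m m ℝ} (h : M3.PosSemidef) :
    (fromBlocks (1 : Matrix n n ℝ) 0 0 M3).PosSemidef := by
  let : Invertible (1 : Matrix n n ℝ) := invertibleOne
  simpa using (PosDef.fromBlocks₁₁ (A := (1 : Matrix n n ℝ)) 0 M3 PosDef.one).mpr
    (by simpa using h)

theorem PosSemidef.fromBlocks_transpose_mul_add [DecidableEq m] [DecidableEq n]
    (M1 : Matrix m n ℝ) {M2 : Matrix n n ℝ} (h : M2.PosSemidef) :
    (fromBlocks (M1ᵀ * M1 + M2) (-M1ᵀ) (-M1) 1).PosSemidef := by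
  let : Invertible (1 : Matrix m m ℝ) := invertibleOne
  simpa using (PosDef.fromBlocks₂₂ (M1ᵀ * M1 + M2) (-M1ᵀ) (PosDef.one (n := m))).mpr
    (by simpa using h)

end Matrix

/-- Every eigenvalue of M = [[-M1ᵀM1 - M2, M1ᵀM3],[M1, -M3]] (M2, M3 real
symmetric PSD) is real and non-positive. -/
theorem stmt0 (p q : ℕ)
    (M1 : Matrix (Fin p) (Fin q) ℝ)
    (M2 : Matrix (Fin q) (Fin q) ℝ) (M3 : Matrix (Fin p) (Fin p) ℝ)
    (h2 : M2.PosSemidef) (h3 : M3.PosSemidef)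
    (M : Matrix (Fin q ⊕ Fin p) (Fin q ⊕ Fin p) ℝ)
    (hM : M = Matrix.fromBlocks (-(M1ᵀ * M1) - M2) (M1ᵀ * M3) M1 (-M3))
    (μ : ℂ) (v : Fin q ⊕ Fin p → ℂ) (hv : v ≠ 0)
    (heig : (M.map (Complex.ofReal)) *ᵥ v = μ • v) :
    μ.im = 0 ∧ μ.re ≤ 0 := by
  rw [hM, fromBlocks_neg_transpose_mul_sub_eq_neg_mul, Matrix.map_neg _ ofReal_neg, neg_mulVec,
    neg_eq_iff_eq_neg, ← neg_smul] at heig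
  have hμ : 0 ≤ -μ :=
    (PosSemidef.fromBlocks_transpose_mul_add M1 h2).nonneg_of_map_ofReal_mul_mulVec_eq_smul
      h3.fromBlocks_one_zero_zero hv heig
  simpa [and_comm] using Complex.nonneg_iff.mp hμ
end

section
/- Let M1, M2, M3 be real matrices with M2 and M3 symmetric positive semi-definite, and let M = [[-M1ᵀM1 - M2, M1ᵀM3],[M1, -M3]]. If 0 is an eigenvalue of M, then it is non-defective: the algebraic multiplicity of 0 equals its geometric multiplicity, equivalently ker(M²) = ker(M). -/
/-!
Write `w = M v = (a, b)`, so `a = -M1ᵀ b - M2 x` and `b = M1 x - M3 y` for `v = (x, y)`.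
If also `M w = 0`, then `M3 b = M1 a` and `M2 a = 0`. Pairing `a` with its defining formula gives
`a ⬝ a + b ⬝ M3 b = 0`, so `a = 0` and `M3 b = 0`; then pairing `b` with its formula gives
`b ⬝ b = -x ⬝ M2 x ≤ 0`, so `b = 0`. Hence `ker M ∩ range M = 0`, which is `ker M² = ker M`.
-/

open Matrix

section

variable {m n R : Type*} [Fintype m] [Fintype n]

lemma dotProduct_mulVec_eq_transpose_mulVec_dotProduct [CommSemiring R] (A : Matrix m n R)
    (u : m → R) (w : n → R) : u ⬝ᵥ A *ᵥ w = Aᵀ *ᵥ u ⬝ᵥ w := by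
  rw [dotProduct_mulVec, mulVec_transpose]

lemma Matrix.IsHermitian.dotProduct_mulVec_comm [CommSemiring R] [StarRing R] [TrivialStar R]
    {S : Matrix n n R} (hS : S.IsHermitian) (u w : n → R) : u ⬝ᵥ S *ᵥ w = S *ᵥ u ⬝ᵥ w := by
  rw [dotProduct_mulVec_eq_transpose_mulVec_dotProduct, ← conjTranspose_eq_transpose_of_trivial,
    hS.eq]

variable (M1 : Matrix m n R) (M2 : Matrix n n R) (M3 : Matrix m m R)

lemma fromBlocks_mulVec_sumElim [CommRing R] (x : n → R) (y : m → R) :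
    fromBlocks (-(M1ᵀ * M1) - M2) (M1ᵀ * M3) M1 (-M3) *ᵥ Sum.elim x y =
      Sum.elim (-(M1ᵀ *ᵥ (M1 *ᵥ x - M3 *ᵥ y)) - M2 *ᵥ x) (M1 *ᵥ x - M3 *ᵥ y) := by
  rw [fromBlocks_mulVec, Sum.elim_comp_inl, Sum.elim_comp_inr]
  congr 1
  · simp only [sub_mulVec, neg_mulVec, ← mulVec_mulVec, mulVec_sub]
    abel
  · rw [neg_mulVec, sub_eq_add_neg]

lemma fromBlocks_mulVec_sumElim_eq_zero_iff [CommRing R] (a : n → R) (b : m → R) :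
    fromBlocks (-(M1ᵀ * M1) - M2) (M1ᵀ * M3) M1 (-M3) *ᵥ Sum.elim a b = 0 ↔
      M1 *ᵥ a = M3 *ᵥ b ∧ M2 *ᵥ a = 0 := by
  rw [fromBlocks_mulVec_sumElim, ← Sum.elim_zero_zero, Sum.elim_eq_iff]
  constructor
  · rintro ⟨h2, h1⟩
    rw [h1, mulVec_zero, neg_zero, zero_sub, neg_eq_zero] at h2
    exact ⟨sub_eq_zero.mp h1, h2⟩
  · rintro ⟨h1, h2⟩
    simp [h1, h2]

end

section

variable {m n : Type*} [Fintype m] [Fintype n]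
  (M1 : Matrix m n ℝ) {M2 : Matrix n n ℝ} {M3 : Matrix m m ℝ}

lemma fromBlocks_mulVec_eq_zero_of_mulVec_mulVec_eq_zero (h2 : M2.PosSemidef)
    (h3 : M3.PosSemidef) (v : n ⊕ m → ℝ)
    (h : fromBlocks (-(M1ᵀ * M1) - M2) (M1ᵀ * M3) M1 (-M3) *ᵥ
      (fromBlocks (-(M1ᵀ * M1) - M2) (M1ᵀ * M3) M1 (-M3) *ᵥ v) = 0) :
    fromBlocks (-(M1ᵀ * M1) - M2) (M1ᵀ * M3) M1 (-M3) *ᵥ v = 0 := by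
  rw [← Sum.elim_comp_inl_inr v, fromBlocks_mulVec_sumElim] at h ⊢
  set x := v ∘ Sum.inl
  set y := v ∘ Sum.inr
  set b := M1 *ᵥ x - M3 *ᵥ y with hb
  set a := -(M1ᵀ *ᵥ b) - M2 *ᵥ x with ha
  obtain ⟨hM1a, hM2a⟩ := (fromBlocks_mulVec_sumElim_eq_zero_iff M1 M2 M3 a b).mp h
  have hsum : a ⬝ᵥ a + b ⬝ᵥ M3 *ᵥ b = 0 := by
    have hM2 : a ⬝ᵥ M2 *ᵥ x = 0 := by rw [h2.1.dotProduct_mulVec_comm, hM2a, zero_dotProduct]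
    have hM1 : a ⬝ᵥ M1ᵀ *ᵥ b = b ⬝ᵥ M3 *ᵥ b := by
      rw [dotProduct_mulVec_eq_transpose_mulVec_dotProduct, transpose_transpose, hM1a,
        dotProduct_comm]
    calc a ⬝ᵥ a + b ⬝ᵥ M3 *ᵥ b
        = -(a ⬝ᵥ M1ᵀ *ᵥ b) - a ⬝ᵥ M2 *ᵥ x + b ⬝ᵥ M3 *ᵥ b := by
          rw [← dotProduct_neg, ← dotProduct_sub, ← ha]
      _ = 0 := by rw [hM2, hM1]; ring
  have haa : 0 ≤ a ⬝ᵥ a := by simpa using dotProduct_star_self_nonneg a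
  have hb3 : 0 ≤ b ⬝ᵥ M3 *ᵥ b := by simpa using h3.dotProduct_mulVec_nonneg b
  have ha0 : a = 0 := dotProduct_self_eq_zero.mp (by linarith)
  have hM3b : M3 *ᵥ b = 0 :=
    (h3.dotProduct_mulVec_zero_iff b).mp (by simpa using (by linarith : b ⬝ᵥ M3 *ᵥ b = 0))
  have hbb : b ⬝ᵥ b = -(x ⬝ᵥ M2 *ᵥ x) := by
    have hM1b : M1ᵀ *ᵥ b = -(M2 *ᵥ x) := by
      rwa [ha, sub_eq_zero, neg_eq_iff_eq_neg] at ha0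
    calc b ⬝ᵥ b = M1ᵀ *ᵥ b ⬝ᵥ x - M3 *ᵥ b ⬝ᵥ y := by
          conv_lhs => enter [2]; rw [hb]
          rw [dotProduct_sub, dotProduct_mulVec_eq_transpose_mulVec_dotProduct,
            h3.1.dotProduct_mulVec_comm]
      _ = -(x ⬝ᵥ M2 *ᵥ x) := by rw [hM1b, hM3b, zero_dotProduct, sub_zero, neg_dotProduct,
          dotProduct_comm]
  have hx2 : 0 ≤ x ⬝ᵥ M2 *ᵥ x := by simpa using h2.dotProduct_mulVec_nonneg x
  have hb0 : b = 0 := dotProduct_self_eq_zero.mp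
    (le_antisymm (by linarith) (by simpa using dotProduct_star_self_nonneg b))
  rw [ha0, hb0, Sum.elim_zero_zero]

end

/-- For M = [[-M1ᵀM1 - M2, M1ᵀM3],[M1, -M3]] (M2, M3 real symmetric PSD),
the zero eigenvalue (if present) is non-defective: ker (M*M) = ker M. -/
theorem stmt1 (p q : ℕ)
    (M1 : Matrix (Fin p) (Fin q) ℝ)
    (M2 : Matrix (Fin q) (Fin q) ℝ) (M3 : Matrix (Fin p) (Fin p) ℝ)
    (h2 : M2.PosSemidef) (h3 : M3.PosSemidef)
    (M : Matrix (Fin q ⊕ Fin p) (Fin q ⊕ Fin p) ℝ)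
    (hM : M = Matrix.fromBlocks (-(M1ᵀ * M1) - M2) (M1ᵀ * M3) M1 (-M3)) :
    ∀ v : Fin q ⊕ Fin p → ℝ, (M * M) *ᵥ v = 0 ↔ M *ᵥ v = 0 := by
  subst hM
  intro v
  rw [← mulVec_mulVec]
  exact ⟨fromBlocks_mulVec_eq_zero_of_mulVec_mulVec_eq_zero M1 h2 h3 v,
    fun h => by rw [h, mulVec_zero]⟩
end

section
/- Let L be the Laplacian matrix of a connected bidirectional (undirected) graph on c nodes, and let m be a positive integer. Then the image of the Kronecker product L ⊗ I_m equals the kernel of 1_cᵀ ⊗ I_m, where 1_c is the all-ones vector in ℝ^c. -/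
/-!
Since `L ⊗ I_m` acts on each of the `m` coordinate slices `i ↦ w (i, j)` separately as `L`, it
suffices to show that the range of `L` is the hyperplane `∑ i, x i = 0`. The range lies in it
because `L` is symmetric with zero row sums, and both have dimension `c - 1`: for a connected
graph the kernel of `L` is one-dimensional.
-/

open Matrix Kronecker

namespace SimpleGraph

variable {V : Type*} [Fintype V] [DecidableEq V] (G : SimpleGraph V) [DecidableRel G.Adj]

theorem sum_lapMatrix_mulVec {R : Type*} [CommRing R] (x : V → R) :
    ∑ i, (G.lapMatrix R *ᵥ x) i = 0 := by
  calc ∑ i, (G.lapMatrix R *ᵥ x) i = (fun _ => 1) ⬝ᵥ (G.lapMatrix R *ᵥ x) := by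
        simp [dotProduct]
    _ = (G.lapMatrix R *ᵥ fun _ => 1) ⬝ᵥ x := by
        rw [dotProduct_mulVec, ← mulVec_transpose, (G.isSymm_lapMatrix R).eq]
    _ = 0 := by rw [lapMatrix_mulVec_const_eq_zero, zero_dotProduct]

variable {G}

theorem Connected.finrank_ker_toLin'_lapMatrix (hG : G.Connected) :
    Module.finrank ℝ (G.lapMatrix ℝ).toLin'.ker = 1 := by
  have := hG.preconnected.subsingleton_connectedComponent
  have : Nonempty G.ConnectedComponent := hG.nonempty.map G.connectedComponentMk
  rw [← card_connectedComponent_eq_finrank_ker_toLin'_lapMatrix]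
  exact le_antisymm (Fintype.card_le_one_iff_subsingleton.mpr ‹_›) Fintype.card_pos

theorem Connected.range_mulVec_lapMatrix (hG : G.Connected) :
    Set.range (G.lapMatrix ℝ).mulVec = {x | ∑ i, x i = 0} := by
  let sum : (V → ℝ) →ₗ[ℝ] ℝ := ∑ i, LinearMap.proj i
  have sum_apply (x : V → ℝ) : sum x = ∑ i, x i := by simp [sum]
  have range_le : (G.lapMatrix ℝ).toLin'.range ≤ sum.ker := by
    rintro _ ⟨x, rfl⟩
    simp [sum_apply, sum_lapMatrix_mulVec]
  have := hG.nonempty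
  have sum_surjective : Function.Surjective sum := fun r =>
    ⟨Pi.single (Classical.arbitrary V) r, by simp [sum_apply]⟩
  have finrank_eq := calc
    Module.finrank ℝ (G.lapMatrix ℝ).toLin'.range = Fintype.card V - 1 := by
      have := (G.lapMatrix ℝ).toLin'.finrank_range_add_finrank_ker
      rw [hG.finrank_ker_toLin'_lapMatrix, Module.finrank_fintype_fun_eq_card] at this
      omega
    _ = Module.finrank ℝ sum.ker := by
      have := sum.finrank_range_add_finrank_ker
      rw [LinearMap.range_eq_top.mpr sum_surjective, finrank_top, Module.finrank_self,
        Module.finrank_fintype_fun_eq_card] at this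
      omega
  have range_eq := Submodule.eq_of_le_of_finrank_eq range_le finrank_eq
  ext x
  simpa [sum_apply] using SetLike.ext_iff.mp range_eq x

end SimpleGraph

namespace Matrix

variable {R l n m : Type*} [CommSemiring R] [Fintype n] [Fintype m] [DecidableEq m]

theorem kronecker_one_mulVec_apply (A : Matrix l n R) (v : n × m → R) (i : l) (j : m) :
    (A ⊗ₖ (1 : Matrix m m R) *ᵥ v) (i, j) = (A *ᵥ fun k => v (k, j)) i := by
  simp [mulVec, dotProduct, Fintype.sum_prod_type, one_apply]

theorem range_mulVec_kronecker_one (A : Matrix l n R) :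
    Set.range (A ⊗ₖ (1 : Matrix m m R)).mulVec =
      {w | ∀ j, (fun i => w (i, j)) ∈ Set.range A.mulVec} := by
  ext w
  constructor
  · rintro ⟨v, rfl⟩ j
    exact ⟨_, funext fun i => (kronecker_one_mulVec_apply A v i j).symm⟩
  · intro hw
    choose v hv using hw
    refine ⟨fun p => v p.2 p.1, funext fun ⟨i, j⟩ => ?_⟩
    rw [kronecker_one_mulVec_apply]
    exact congrFun (hv j) i

end Matrix

theorem stmt4_general (c m : ℕ) (G : SimpleGraph (Fin c))
    [DecidableRel G.Adj] (hG : G.Connected) :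
    Set.range ((G.lapMatrix ℝ ⊗ₖ (1 : Matrix (Fin m) (Fin m) ℝ)).mulVec) =
      {w : Fin c × Fin m → ℝ | ∀ j : Fin m, ∑ i : Fin c, w (i, j) = 0} := by
  rw [range_mulVec_kronecker_one, hG.range_mulVec_lapMatrix]
  rfl

/-- For the Laplacian L of a connected graph on c nodes,
image (L ⊗ I_m) = ker (1_cᵀ ⊗ I_m), i.e. the image of L ⊗ I_m is exactly the
set of vectors whose m-dimensional blocks sum to zero. -/
theorem stmt4 (c m : ℕ) (hm : 0 < m) (G : SimpleGraph (Fin c))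
    [DecidableRel G.Adj] (hG : G.Connected) :
    Set.range ((G.lapMatrix ℝ ⊗ₖ (1 : Matrix (Fin m) (Fin m) ℝ)).mulVec) =
      {w : Fin c × Fin m → ℝ | ∀ j : Fin m, ∑ i : Fin c, w (i, j) = 0} :=
  stmt4_general c m G hG
end
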